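/- arXiv:2510.20446 — 3 statements merged into one kernel-verified Lean document; each statement's English description precedes it below -/
import Mathlib

section
/- If A is an (m,4,3)-perfect system of difference sets, then A together with the additional block {0, 1, 6m+4, 6m+6} forms an (m+1,4,1)-perfect system of difference sets. -/
/-- The multiset of positive differences of a finite set of naturals. -/
def posDiffs (B : Finset ℕ) : Multiset ℕ :=
  ((B ×ˢ B).filter (fun p => p.2 < p.1)).val.map (fun p => p.1 - p.2)

/-- `A` is an `(m,k,c)`-perfect system of difference sets: a collection of `m`
`k`-subsets of the nonnegative integers whose positive differences cover each
element of `{c, c+1, …, c−1+m·k(k−1)/2}` exactly once. -/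
def IsPSDS (m k c : ℕ) (A : Multiset (Finset ℕ)) : Prop :=
  Multiset.card A = m ∧ (∀ B ∈ A, B.card = k) ∧
  ∀ d ∈ Finset.Icc c (c - 1 + m * (k * (k - 1) / 2)), (A.bind posDiffs).count d = 1

/-!
Each `4`-block has `C(4,2) = 6` positive differences, so an `(m,4,3)`-PSDS has exactly `6m`
differences; since each of the `6m` values `3, …, 6m+2` occurs among them, its difference multiset
is exactly `{3, …, 6m+2}`. The new block `{0, 1, 6m+4, 6m+6}` has differences
`1, 2, 6m+3, 6m+4, 6m+5, 6m+6`, which fill the two ends of `{1, …, 6m+6}`.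
-/

open Finset

theorem posDiffs_of_lt {a b c d : ℕ} (hab : a < b) (hbc : b < c) (hcd : c < d) :
    posDiffs {a, b, c, d} = {b - a, c - a, d - a, c - b, d - b, d - c} := by
  have hpairs : ({a, b, c, d} ×ˢ {a, b, c, d} : Finset (ℕ × ℕ)).filter (fun p => p.2 < p.1) =
      {(b, a), (c, a), (d, a), (c, b), (d, b), (d, c)} := by
    ext ⟨x, y⟩
    simp only [mem_filter, mem_product, mem_insert, mem_singleton, Prod.mk.injEq]
    omega
  have hval : ({(b, a), (c, a), (d, a), (c, b), (d, b), (d, c)} : Finset (ℕ × ℕ)).val =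
      {(b, a), (c, a), (d, a), (c, b), (d, b), (d, c)} := by
    simp only [insert_val, singleton_val]
    repeat rw [Multiset.ndinsert_of_notMem (by simp; omega)]
    rfl
  rw [posDiffs, hpairs, hval]
  rfl

theorem card_posDiffs (B : Finset ℕ) : Multiset.card (posDiffs B) = B.card.choose 2 := by
  rw [posDiffs, Multiset.card_map, ← Finset.card_def, ← card_product_filter_lt]
  exact card_equiv (Equiv.prodComm ℕ ℕ) (by grind)

theorem card_bind_posDiffs {A : Multiset (Finset ℕ)} {k : ℕ} (hA : ∀ B ∈ A, B.card = k) :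
    Multiset.card (A.bind posDiffs) = Multiset.card A * k.choose 2 := by
  rw [Multiset.card_bind,
    Multiset.map_congr rfl fun B hB => by rw [Function.comp_apply, card_posDiffs, hA B hB],
    Multiset.map_const', Multiset.sum_replicate, smul_eq_mul]

theorem Multiset.eq_val_of_count_eq_one {α : Type*} [DecidableEq α] {S : Multiset α}
    {s : Finset α} (hcount : ∀ a ∈ s, S.count a = 1) (hcard : Multiset.card S ≤ s.card) :
    S = s.val := by
  refine (Multiset.eq_of_le_of_card_le ?_ hcard).symm
  rw [Multiset.le_iff_count]
  intro a
  by_cases ha : a ∈ s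
  · rw [Multiset.count_eq_one_of_mem s.nodup ha, hcount a ha]
  · rw [Multiset.count_eq_zero_of_notMem ha]
    exact Nat.zero_le _

theorem IsPSDS.bind_posDiffs_eq {m k c : ℕ} {A : Multiset (Finset ℕ)} (h : IsPSDS m k c A)
    (hc : 0 < c) :
    A.bind posDiffs = (Icc c (c - 1 + m * (k * (k - 1) / 2))).val := by
  obtain ⟨hcard, hk, hcount⟩ := h
  refine Multiset.eq_val_of_count_eq_one hcount ?_
  rw [card_bind_posDiffs hk, hcard, Nat.card_Icc, Nat.choose_two_right]
  omega

/-- Adjoining the block `{0, 1, 6m+4, 6m+6}` to an `(m,4,3)`-PSDS yields an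
`(m+1,4,1)`-PSDS. -/
theorem stmt4 (m : ℕ) (A : Multiset (Finset ℕ)) (h : IsPSDS m 4 3 A) :
    IsPSDS (m + 1) 4 1 (({0, 1, 6 * m + 4, 6 * m + 6} : Finset ℕ) ::ₘ A) := by
  have hold := h.bind_posDiffs_eq three_pos
  obtain ⟨hcard, hk, -⟩ := h
  have hnew : posDiffs {0, 1, 6 * m + 4, 6 * m + 6} =
      {1, 6 * m + 4, 6 * m + 6, 6 * m + 3, 6 * m + 5, 2} := by
    simpa using posDiffs_of_lt (a := 0) (b := 1) (c := 6 * m + 4) (d := 6 * m + 6)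
      one_pos (by omega) (by omega)
  refine ⟨by rw [Multiset.card_cons, hcard], ?_, ?_⟩
  · simp only [Multiset.mem_cons, forall_eq_or_imp]
    exact ⟨by rw [card_insert_of_notMem (by simp), card_insert_of_notMem (by simp),
      card_pair (by omega)], hk⟩
  · intro d hd
    rw [mem_Icc] at hd
    rw [Multiset.cons_bind, Multiset.count_add, hnew, hold, Multiset.count_eq_of_nodup (nodup _)]
    simp only [Multiset.insert_eq_cons, Multiset.count_cons, Multiset.count_singleton, mem_val,
      mem_Icc]
    split_ifs <;> omega
end

section
/- For every even integer t ≥ 2 and v = 12t+1, the collection consisting of the blocks F_{1,i} = {0, 3t+i, 2i} for 1 ≤ i ≤ t−1 with i ≠ t/2, the blocks F_{2,i} = {0, 5t+i, 2i+1} for 0 ≤ i ≤ t−1, together with B_1 = {0, t, 3t} and B_2 = {0, 5t/2, 6t}, forms a (v,3,1)-perfect difference family: the positive differences cover each element of {1, 2, ..., 6t} exactly once. -/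
/-- `F` is a `(v,k,λ)`-perfect difference family. -/
def IsPDF (v k lam : ℕ) (F : Multiset (Finset ℕ)) : Prop :=
  Odd v ∧ (∀ B ∈ F, B.card = k ∧ B ⊆ Finset.range v) ∧
  ∀ d ∈ Finset.Icc 1 ((v - 1) / 2), (F.bind posDiffs).count d = lam

open Finset

theorem card_filter_eq_ite {ι : Type*} {S : Finset ι} {p : ι → Prop} [DecidablePred p]
    {c : Prop} [Decidable c] (w : ι) (h : ∀ i, i ∈ S ∧ p i ↔ c ∧ i = w) :
    #{i ∈ S | p i} = if c then 1 else 0 := by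
  split_ifs with hc
  · exact card_eq_one.mpr ⟨w, by ext i; simp [h, hc]⟩
  · exact card_eq_zero.mpr (by ext i; simp [h, hc])

theorem Multiset.count_bind_triple {ι α : Type*} [DecidableEq α] (S : Finset ι)
    (f g h : ι → α) (a : α) :
    (S.val.bind fun i => {f i, g i, h i}).count a =
      #{i ∈ S | f i = a} + #{i ∈ S | g i = a} + #{i ∈ S | h i = a} := by
  simp only [Multiset.count_bind, card_filter, ← sum_add_distrib]
  refine sum_congr rfl fun i _ => ?_
  simp only [Multiset.insert_eq_cons, Multiset.count_cons, Multiset.count_singleton, eq_comm]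
  omega

theorem card_zero_triple {a b : ℕ} (ha : 0 < a) (hab : a < b) : #({0, a, b} : Finset ℕ) = 3 := by
  rw [card_insert_of_notMem (by simp; omega), card_pair hab.ne]

theorem zero_triple_subset_range {a b v : ℕ} (hab : a < b) (hb : b < v) :
    ({0, a, b} : Finset ℕ) ⊆ range v := by
  intro x hx
  simp only [mem_insert, mem_singleton] at hx
  simp only [mem_range]
  omega

theorem posDiffs_zero_triple {a b : ℕ} (ha : 0 < a) (hab : a < b) :
    posDiffs {0, a, b} = {a, b, b - a} := by
  have hpairs : ({0, a, b} ×ˢ {0, a, b} : Finset (ℕ × ℕ)).filter (fun p => p.2 < p.1) =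
      {(a, 0), (b, 0), (b, a)} := by
    ext ⟨x, y⟩
    simp only [mem_filter, mem_product, mem_insert, mem_singleton, Prod.mk.injEq]
    omega
  rw [posDiffs, hpairs, insert_val_of_notMem (by simp; omega),
    insert_val_of_notMem (by simp; omega)]
  simp

theorem bind_posDiffs_map_zero_triple {ι : Type*} (S : Multiset ι) (a b : ι → ℕ)
    (ha : ∀ i ∈ S, 0 < a i) (hab : ∀ i ∈ S, a i < b i) :
    (S.map fun i => ({0, a i, b i} : Finset ℕ)).bind posDiffs =
      S.bind fun i => {a i, b i, b i - a i} := by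
  rw [Multiset.bind_map]
  exact Multiset.bind_congr fun i hi => posDiffs_zero_triple (ha i hi) (hab i hi)

def pdfBlocks (t : ℕ) : Multiset (Finset ℕ) :=
  (((Icc 1 (t - 1)).erase (t / 2)).val.map fun i => ({0, 3 * t + i, 2 * i} : Finset ℕ)) +
    ((range t).val.map fun i => ({0, 5 * t + i, 2 * i + 1} : Finset ℕ)) +
    {{0, t, 3 * t}, {0, 5 * t / 2, 6 * t}}

theorem pdfBlocks_eq (t : ℕ) : pdfBlocks t =
    (((Icc 1 (t - 1)).erase (t / 2)).val.map fun i => ({0, 2 * i, 3 * t + i} : Finset ℕ)) +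
      ((range t).val.map fun i => ({0, 2 * i + 1, 5 * t + i} : Finset ℕ)) +
      {{0, t, 3 * t}, {0, 5 * t / 2, 6 * t}} := by
  simp only [pdfBlocks, pair_comm (3 * t + _), pair_comm (5 * t + _)]

theorem exists_eq_zero_triple_of_mem_pdfBlocks {t : ℕ} {B : Finset ℕ} (ht : 0 < t)
    (hB : B ∈ pdfBlocks t) : ∃ a b, 0 < a ∧ a < b ∧ b ≤ 6 * t ∧ B = {0, a, b} := by
  simp only [pdfBlocks_eq, Multiset.mem_add, Multiset.mem_map, Finset.mem_val, mem_erase,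
    mem_Icc, mem_range, Multiset.insert_eq_cons, Multiset.mem_cons,
    Multiset.mem_singleton] at hB
  rcases hB with ((⟨i, hi, rfl⟩ | ⟨i, hi, rfl⟩) | rfl | rfl)
  · exact ⟨_, _, by omega, by omega, by omega, rfl⟩
  · exact ⟨_, _, by omega, by omega, by omega, rfl⟩
  · exact ⟨_, _, ht, by omega, by omega, rfl⟩
  · exact ⟨_, _, by omega, by omega, le_rfl, rfl⟩

theorem bind_posDiffs_pdfBlocks {t : ℕ} (ht : 0 < t) : (pdfBlocks t).bind posDiffs =
    (((Icc 1 (t - 1)).erase (t / 2)).val.bind fun i => {2 * i, 3 * t + i, 3 * t + i - 2 * i}) +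
      ((range t).val.bind fun i => {2 * i + 1, 5 * t + i, 5 * t + i - (2 * i + 1)}) +
      ({t, 3 * t, 3 * t - t} + {5 * t / 2, 6 * t, 6 * t - 5 * t / 2}) := by
  rw [pdfBlocks_eq, Multiset.add_bind, Multiset.add_bind,
    bind_posDiffs_map_zero_triple _ _ _ (fun i hi => ?_) (fun i hi => ?_),
    bind_posDiffs_map_zero_triple _ _ _ (fun i hi => ?_) (fun i hi => ?_)]
  · simp only [Multiset.insert_eq_cons, Multiset.cons_bind, Multiset.singleton_bind,
      posDiffs_zero_triple ht (by omega : t < 3 * t),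
      posDiffs_zero_triple (by omega : 0 < 5 * t / 2) (by omega : 5 * t / 2 < 6 * t)]
  all_goals simp only [Finset.mem_val, mem_erase, mem_Icc, mem_range] at hi; omega

theorem count_bind_posDiffs_pdfBlocks {t d : ℕ} (ht : Even t) (ht2 : 2 ≤ t) (hd1 : 1 ≤ d)
    (hd2 : d ≤ 6 * t) : ((pdfBlocks t).bind posDiffs).count d = 1 := by
  have ht' : t % 2 = 0 := Nat.even_iff.mp ht
  rw [bind_posDiffs_pdfBlocks (by omega)]
  simp only [Multiset.count_add, Multiset.count_bind_triple]
  rw [card_filter_eq_ite (c := d % 2 = 0 ∧ 2 ≤ d ∧ d ≤ 2 * t - 2 ∧ d ≠ t) (d / 2)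
      (fun i => by rw [mem_erase, mem_Icc]; omega),
    card_filter_eq_ite (c := 3 * t + 1 ≤ d ∧ d ≤ 4 * t - 1 ∧ 2 * d ≠ 7 * t) (d - 3 * t)
      (fun i => by rw [mem_erase, mem_Icc]; omega),
    card_filter_eq_ite (c := 2 * t + 1 ≤ d ∧ d ≤ 3 * t - 1 ∧ 2 * d ≠ 5 * t) (3 * t - d)
      (fun i => by rw [mem_erase, mem_Icc]; omega),
    card_filter_eq_ite (c := d % 2 = 1 ∧ d ≤ 2 * t - 1) (d / 2)
      (fun i => by rw [mem_range]; omega),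
    card_filter_eq_ite (c := 5 * t ≤ d ∧ d ≤ 6 * t - 1) (d - 5 * t)
      (fun i => by rw [mem_range]; omega),
    card_filter_eq_ite (c := 4 * t ≤ d ∧ d ≤ 5 * t - 1) (5 * t - 1 - d)
      (fun i => by rw [mem_range]; omega)]
  simp only [Multiset.insert_eq_cons, Multiset.count_cons, Multiset.count_singleton]
  grind (splits := 30)

/-- For every even `t ≥ 2`, the blocks `{0, 3t+i, 2i}` (`1 ≤ i ≤ t−1`, `i ≠ t/2`),
`{0, 5t+i, 2i+1}` (`0 ≤ i ≤ t−1`), `{0, t, 3t}` and `{0, 5t/2, 6t}` form a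
`(12t+1,3,1)`-perfect difference family. -/
theorem stmt7 (t : ℕ) (ht : Even t) (ht2 : 2 ≤ t) :
    IsPDF (12 * t + 1) 3 1
      ((((Finset.Icc 1 (t - 1)).erase (t / 2)).val.map
          (fun i => ({0, 3 * t + i, 2 * i} : Finset ℕ))) +
       ((Finset.range t).val.map
          (fun i => ({0, 5 * t + i, 2 * i + 1} : Finset ℕ))) +
       ({({0, t, 3 * t} : Finset ℕ), {0, 5 * t / 2, 6 * t}} : Multiset (Finset ℕ))) := by
  show IsPDF (12 * t + 1) 3 1 (pdfBlocks t)
  refine ⟨⟨6 * t, by ring⟩, fun B hB => ?_, fun d hd => ?_⟩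
  · obtain ⟨a, b, ha, hab, hb, rfl⟩ := exists_eq_zero_triple_of_mem_pdfBlocks (by omega) hB
    exact ⟨card_zero_triple ha hab, zero_triple_subset_range hab (by omega)⟩
  · obtain ⟨hd1, hd2⟩ := mem_Icc.mp hd
    exact count_bind_posDiffs_pdfBlocks ht ht2 hd1 (by omega)
end

section
/- The ordered triples B_1 = (0,3,0) and B_2 = (0,5,0) of elements of Z_12 form a (12,3,1)-layered difference family: Δ*B_1 + Δ*B_2 = Σ_{g∈Z_12} g in the group ring Q[Z_12]. -/
/-!
For `B = (0, b, 0)` the two pairs of positions at distance one contribute `[b] + [b-1] + [-b] + [-b-1]`,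
and the pair at distance two contributes `½([0] + [1] + [-1] + [-2])`. With `b = 3` and `b = 5` in
`ℤ/12` the first parts are `{2, 3, 8, 9}` and `{4, 5, 6, 7}`, and the two halves add up to
`{10, 11, 0, 1}`: every element of `ℤ/12` is hit exactly once.
-/

open Finset in
/-- `Δ* B` for an ordered `k`-multi-subset of `ZMod v`, in the group ring `ℚ[ZMod v]`. -/
noncomputable def deltaStar {v k : ℕ} (b : Fin k → ZMod v) :
    AddMonoidAlgebra ℚ (ZMod v) :=
  ∑ s1 : Fin k, ∑ s2 : Fin k,
    if s1 < s2 then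
      ∑ ℓ ∈ Finset.range (s2.val - s1.val),
        ((s2.val - s1.val : ℚ))⁻¹ •
          (AddMonoidAlgebra.single (b s2 - b s1 + (ℓ : ZMod v)) (1 : ℚ) +
           AddMonoidAlgebra.single (b s1 - b s2 - (ℓ : ZMod v) - 1) (1 : ℚ))
    else 0

open AddMonoidAlgebra Finset

theorem ZMod.sum_eq_sum_range {M : Type*} [AddCommMonoid M] (n : ℕ) [NeZero n]
    (f : ZMod n → M) : ∑ g, f g = ∑ i ∈ range n, f i := by
  refine sum_nbij' ZMod.val Nat.cast ?_ ?_ ?_ ?_ ?_ <;> intro _ _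
  all_goals simp_all [ZMod.val_lt, Nat.mod_eq_of_lt]

theorem deltaStar_fin_three {v : ℕ} (a b c : ZMod v) :
    deltaStar ![a, b, c] =
      single (b - a) (1 : ℚ) + single (a - b - 1) 1 + single (c - b) 1 + single (b - c - 1) 1 +
        (2 : ℚ)⁻¹ • (single (c - a) 1 + single (a - c - 1) 1 +
          single (c - a + 1) 1 + single (a - c - 1 - 1) 1) := by
  simp only [deltaStar, Fin.sum_univ_three]
  norm_num [Fin.lt_def, sum_range_succ, Matrix.cons_val_two]
  abel

/-- The ordered triples `(0,3,0)` and `(0,5,0)` over `ZMod 12` form a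
`(12,3,1)`-layered difference family. -/
theorem stmt10 :
    deltaStar ![(0 : ZMod 12), 3, 0] + deltaStar ![(0 : ZMod 12), 5, 0] =
      ∑ g : ZMod 12, AddMonoidAlgebra.single g (1 : ℚ) := by
  rw [deltaStar_fin_three, deltaStar_fin_three, ZMod.sum_eq_sum_range]
  simp only [sum_range_succ, sum_range_zero, Nat.cast_ofNat]
  reduce_mod_char
  module
end
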